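/- Let n ≥ p ≥ 1 and, for X, Y ∈ St(n,p), define the np×np matrix H_L(X,Y) = −I_{np} + (1/2)(I_p⊗YYᵀ) − (1/4)(I_p⊗YYᵀXXᵀ) − (1/4)(Xᵀ⊗YYᵀX)Π + (1/2)(I_p⊗XXᵀ) + (1/2)(Xᵀ⊗X)Π + (1/2)(Yᵀ⊗Y)Π − (1/4)(YᵀXXᵀ⊗Y)Π − (1/4)(YᵀX⊗YXᵀ) + (Yᵀ⊗YYᵀX)Π − (YᵀXXᵀ⊗YYᵀX)Π − YᵀX⊗YYᵀXXᵀ + YᵀX⊗YYᵀ − (Yᵀ⊗X)Π + (YᵀXXᵀ⊗X)Π + YᵀX⊗XXᵀ − YᵀX⊗I_n. Then for all X, Y ∈ St(n,p), ‖H_L(X,Y) − (−2I_{np} + (1/2)(Xᵀ⊗X)Π + (3/2)(I_p⊗XXᵀ))‖₂ ≤ (11/2)·‖Y−X‖₂ + 10·‖Y−X‖₂² + 4·‖Y−X‖₂³. -/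
import Mathlib

open Matrix
open scoped Kronecker

noncomputable def specNorm {m n : Type*} [Fintype m] [Fintype n] [DecidableEq n]
    (A : Matrix m n ℝ) : ℝ :=
  ‖LinearMap.toContinuousLinearMap (Matrix.toEuclideanLin A)‖

/-- The commutation (vec-permutation) matrix `Π` with rows indexed by `Fin a × Fin b`
and columns by `Fin b × Fin a`; entry `((j,i),(i',j'))` is `1` iff `i = i'` and `j = j'`. -/
def commMat (a b : ℕ) : Matrix (Fin a × Fin b) (Fin b × Fin a) ℝ :=
  fun r c => if r.1 = c.2 ∧ r.2 = c.1 then 1 else 0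

/-- The explicit formula `H_L(X,Y)` for the mixed derivative `∇_X∇_Y` of the extended
squared-distance function at `X, Y ∈ St(n,p)`. -/
noncomputable def HL (n p : ℕ) (X Y : Matrix (Fin n) (Fin p) ℝ) :
    Matrix (Fin p × Fin n) (Fin p × Fin n) ℝ :=
  -(1 : Matrix (Fin p × Fin n) (Fin p × Fin n) ℝ)
  + (1 / 2 : ℝ) • ((1 : Matrix (Fin p) (Fin p) ℝ) ⊗ₖ (Y * Yᵀ))
  - (1 / 4 : ℝ) • ((1 : Matrix (Fin p) (Fin p) ℝ) ⊗ₖ (Y * Yᵀ * X * Xᵀ))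
  - (1 / 4 : ℝ) • ((Xᵀ ⊗ₖ (Y * Yᵀ * X)) * commMat n p)
  + (1 / 2 : ℝ) • ((1 : Matrix (Fin p) (Fin p) ℝ) ⊗ₖ (X * Xᵀ))
  + (1 / 2 : ℝ) • ((Xᵀ ⊗ₖ X) * commMat n p)
  + (1 / 2 : ℝ) • ((Yᵀ ⊗ₖ Y) * commMat n p)
  - (1 / 4 : ℝ) • (((Yᵀ * X * Xᵀ) ⊗ₖ Y) * commMat n p)
  - (1 / 4 : ℝ) • ((Yᵀ * X) ⊗ₖ (Y * Xᵀ))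
  + (Yᵀ ⊗ₖ (Y * Yᵀ * X)) * commMat n p
  - ((Yᵀ * X * Xᵀ) ⊗ₖ (Y * Yᵀ * X)) * commMat n p
  - (Yᵀ * X) ⊗ₖ (Y * Yᵀ * X * Xᵀ)
  + (Yᵀ * X) ⊗ₖ (Y * Yᵀ)
  - (Yᵀ ⊗ₖ X) * commMat n p
  + ((Yᵀ * X * Xᵀ) ⊗ₖ X) * commMat n p
  + (Yᵀ * X) ⊗ₖ (X * Xᵀ)
  - (Yᵀ * X) ⊗ₖ (1 : Matrix (Fin n) (Fin n) ℝ)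

/-! ### Auxiliary lemmas about the L2 operator norm -/

open scoped Matrix.Norms.L2Operator

namespace StmtAux

lemma specNorm_eq_norm {m n : Type*} [Fintype m] [Fintype n] [DecidableEq n]
    (A : Matrix m n ℝ) : specNorm A = ‖A‖ := rfl

lemma euc_norm_sq {m : Type*} [Fintype m] (v : EuclideanSpace ℝ m) :
    ‖v‖ ^ 2 = ∑ i, v i ^ 2 := by
  rw [EuclideanSpace.norm_eq, Real.sq_sqrt (by positivity)]
  simp [Real.norm_eq_abs, sq_abs]

lemma mulVec_sq_le {m n : Type*} [Fintype m] [Fintype n] [DecidableEq n]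
    (A : Matrix m n ℝ) (v : n → ℝ) :
    ∑ i, (A *ᵥ v) i ^ 2 ≤ ‖A‖ ^ 2 * ∑ j, v j ^ 2 := by
  have h := Matrix.l2_opNorm_mulVec A ((WithLp.equiv 2 (n → ℝ)).symm v)
  have h1 : ‖(EuclideanSpace.equiv m ℝ).symm (A *ᵥ (WithLp.equiv 2 (n → ℝ)).symm v)‖ ^ 2
      = ∑ i, (A *ᵥ v) i ^ 2 := by
    rw [euc_norm_sq]; rfl
  have h2 : ‖(WithLp.equiv 2 (n → ℝ)).symm v‖ ^ 2 = ∑ j, v j ^ 2 := by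
    rw [euc_norm_sq]; rfl
  have h3 : 0 ≤ ‖(EuclideanSpace.equiv m ℝ).symm (A *ᵥ (WithLp.equiv 2 (n → ℝ)).symm v)‖ :=
    norm_nonneg _
  have h4 : 0 ≤ ‖A‖ := norm_nonneg _
  have h5 : 0 ≤ ‖(WithLp.equiv 2 (n → ℝ)).symm v‖ := norm_nonneg _
  nlinarith [h, h1, h2]

lemma opNorm_le_of_sq {m n : Type*} [Fintype m] [Fintype n] [DecidableEq n]
    (M : Matrix m n ℝ) (c : ℝ) (hc : 0 ≤ c)
    (h : ∀ v : n → ℝ, ∑ i, (M *ᵥ v) i ^ 2 ≤ c ^ 2 * ∑ j, v j ^ 2) : ‖M‖ ≤ c := by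
  rw [Matrix.l2_opNorm_def]
  apply ContinuousLinearMap.opNorm_le_bound _ hc
  intro x
  have happ : (LinearEquiv.trans Matrix.toEuclideanLin LinearMap.toContinuousLinearMap M) x
      = (EuclideanSpace.equiv m ℝ).symm (M *ᵥ (WithLp.equiv 2 (n → ℝ)) x) := rfl
  rw [happ]
  have hx : ‖(EuclideanSpace.equiv m ℝ).symm (M *ᵥ (WithLp.equiv 2 (n → ℝ)) x)‖ ^ 2
      ≤ (c * ‖x‖) ^ 2 := by
    rw [euc_norm_sq]
    have := h ((WithLp.equiv 2 (n → ℝ)) x)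
    have hx2 : ‖x‖ ^ 2 = ∑ j, ((WithLp.equiv 2 (n → ℝ)) x) j ^ 2 := by
      rw [euc_norm_sq]; rfl
    calc ∑ i, (M *ᵥ (WithLp.equiv 2 (n → ℝ)) x) i ^ 2
        ≤ c ^ 2 * ∑ j, ((WithLp.equiv 2 (n → ℝ)) x) j ^ 2 := this
      _ = (c * ‖x‖) ^ 2 := by rw [mul_pow, hx2]
  nlinarith [norm_nonneg ((EuclideanSpace.equiv m ℝ).symm (M *ᵥ (WithLp.equiv 2 (n → ℝ)) x)),
    mul_nonneg hc (norm_nonneg x), hx]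

section kron
variable {a c d : Type*} [Fintype a] [Fintype c] [Fintype d] [DecidableEq a] [DecidableEq c]
  [DecidableEq d]

omit [Fintype c] [DecidableEq c] [DecidableEq d] in
lemma one_kron_mulVec (B : Matrix c d ℝ) (v : a × d → ℝ) (i : a) (j : c) :
    (((1 : Matrix a a ℝ) ⊗ₖ B) *ᵥ v) (i, j) = (B *ᵥ fun j' => v (i, j')) j := by
  simp [mulVec, dotProduct, Fintype.sum_prod_type, kroneckerMap_apply, one_apply, ite_mul,
    Finset.sum_ite_eq, Finset.mem_univ]

omit [Fintype a] [DecidableEq a] [DecidableEq c] in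
lemma kron_one_mulVec (A : Matrix a c ℝ) (v : c × d → ℝ) (i : a) (j : d) :
    ((A ⊗ₖ (1 : Matrix d d ℝ)) *ᵥ v) (i, j) = (A *ᵥ fun i' => v (i', j)) i := by
  simp [mulVec, dotProduct, Fintype.sum_prod_type, kroneckerMap_apply, one_apply, mul_ite,
    Finset.sum_ite_eq, Finset.mem_univ]

lemma one_kron_le (B : Matrix c d ℝ) : ‖(1 : Matrix a a ℝ) ⊗ₖ B‖ ≤ ‖B‖ := by
  apply opNorm_le_of_sq _ _ (norm_nonneg B)
  intro v
  rw [Fintype.sum_prod_type]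
  calc ∑ i : a, ∑ j : c, (((1 : Matrix a a ℝ) ⊗ₖ B) *ᵥ v) (i, j) ^ 2
      = ∑ i : a, ∑ j : c, ((B *ᵥ fun j' => v (i, j')) j) ^ 2 := by
        simp only [one_kron_mulVec]
    _ ≤ ∑ i : a, ‖B‖ ^ 2 * ∑ j' : d, v (i, j') ^ 2 := by
        exact Finset.sum_le_sum fun i _ => mulVec_sq_le B _
    _ = ‖B‖ ^ 2 * ∑ p : a × d, v p ^ 2 := by
        rw [Fintype.sum_prod_type, Finset.mul_sum]

lemma kron_one_le (A : Matrix a c ℝ) : ‖A ⊗ₖ (1 : Matrix d d ℝ)‖ ≤ ‖A‖ := by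
  apply opNorm_le_of_sq _ _ (norm_nonneg A)
  intro v
  rw [Fintype.sum_prod_type]
  calc ∑ i : a, ∑ j : d, ((A ⊗ₖ (1 : Matrix d d ℝ)) *ᵥ v) (i, j) ^ 2
      = ∑ j : d, ∑ i : a, ((A *ᵥ fun i' => v (i', j)) i) ^ 2 := by
        rw [Finset.sum_comm]
        simp only [kron_one_mulVec]
    _ ≤ ∑ j : d, ‖A‖ ^ 2 * ∑ i' : c, v (i', j) ^ 2 := by
        exact Finset.sum_le_sum fun j _ => mulVec_sq_le A _
    _ = ‖A‖ ^ 2 * ∑ p : c × d, v p ^ 2 := by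
        rw [Fintype.sum_prod_type, ← Finset.sum_comm, Finset.mul_sum]

end kron

lemma kron_le {a b c d : Type*} [Fintype a] [Fintype b] [Fintype c] [Fintype d]
    [DecidableEq a] [DecidableEq b] [DecidableEq c] [DecidableEq d]
    (A : Matrix a b ℝ) (B : Matrix c d ℝ) : ‖A ⊗ₖ B‖ ≤ ‖A‖ * ‖B‖ := by
  have hfac := Matrix.mul_kronecker_mul A (1 : Matrix b b ℝ) (1 : Matrix c c ℝ) B
  rw [Matrix.mul_one, Matrix.one_mul] at hfac
  rw [hfac]
  calc ‖(A ⊗ₖ (1 : Matrix c c ℝ)) * ((1 : Matrix b b ℝ) ⊗ₖ B)‖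
      ≤ ‖A ⊗ₖ (1 : Matrix c c ℝ)‖ * ‖(1 : Matrix b b ℝ) ⊗ₖ B‖ := Matrix.l2_opNorm_mul _ _
    _ ≤ ‖A‖ * ‖B‖ := by
        apply mul_le_mul (kron_one_le A) (one_kron_le B) (norm_nonneg _) (norm_nonneg _)

lemma commMat_le (a b : ℕ) : ‖commMat a b‖ ≤ 1 := by
  apply opNorm_le_of_sq _ _ zero_le_one
  intro v
  have happ : ∀ r : Fin a × Fin b, (commMat a b *ᵥ v) r = v (r.2, r.1) := by
    intro r
    simp [commMat, mulVec, dotProduct, Fintype.sum_prod_type, ite_and, ite_mul,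
      Finset.sum_ite_eq, Finset.mem_univ]
  simp only [happ, one_pow, one_mul]
  apply le_of_eq
  exact Fintype.sum_equiv (Equiv.prodComm (Fin a) (Fin b)) _ _ (fun r => rfl)

lemma mul_commMat_le {n p : ℕ} (M : Matrix (Fin p × Fin n) (Fin n × Fin p) ℝ) :
    ‖M * commMat n p‖ ≤ ‖M‖ := by
  calc ‖M * commMat n p‖ ≤ ‖M‖ * ‖commMat n p‖ := Matrix.l2_opNorm_mul _ _
    _ ≤ ‖M‖ * 1 := mul_le_mul_of_nonneg_left (commMat_le n p) (norm_nonneg M)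
    _ = ‖M‖ := mul_one _

lemma norm_one_le (p : ℕ) : ‖(1 : Matrix (Fin p) (Fin p) ℝ)‖ ≤ 1 := by
  rw [Matrix.cstar_norm_def, _root_.map_one]
  exact ContinuousLinearMap.norm_id_le

lemma norm_transpose {m n : Type*} [Fintype m] [Fintype n] [DecidableEq m] [DecidableEq n]
    (A : Matrix m n ℝ) : ‖Aᵀ‖ = ‖A‖ := by
  have h : Aᴴ = Aᵀ := by ext i j; simp [conjTranspose_apply]
  rw [← h, Matrix.l2_opNorm_conjTranspose A]

lemma mulb {α β γ : Type*} [Fintype α] [Fintype β] [Fintype γ] [DecidableEq β] [DecidableEq γ]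
    (A : Matrix α β ℝ) (B : Matrix β γ ℝ) {x y : ℝ} (hA : ‖A‖ ≤ x) (hB : ‖B‖ ≤ y)
    (hx : 0 ≤ x) : ‖A * B‖ ≤ x * y :=
  le_trans (Matrix.l2_opNorm_mul A B) (mul_le_mul hA hB (norm_nonneg B) hx)

lemma kronb {a b c d : Type*} [Fintype a] [Fintype b] [Fintype c] [Fintype d]
    [DecidableEq a] [DecidableEq b] [DecidableEq c] [DecidableEq d]
    (A : Matrix a b ℝ) (B : Matrix c d ℝ) {x y : ℝ} (hA : ‖A‖ ≤ x) (hB : ‖B‖ ≤ y)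
    (hx : 0 ≤ x) : ‖A ⊗ₖ B‖ ≤ x * y :=
  le_trans (kron_le A B) (mul_le_mul hA hB (norm_nonneg B) hx)

lemma smulb {V : Type*} [SeminormedAddCommGroup V] [NormedSpace ℝ V] (c : ℝ) (v : V)
    {b : ℝ} (h : ‖v‖ ≤ b) (hc : 0 ≤ c) : ‖c • v‖ ≤ c * b := by
  rw [norm_smul, Real.norm_eq_abs, abs_of_nonneg hc]
  exact mul_le_mul_of_nonneg_left h hc

lemma norm_chain7 {V : Type*} [SeminormedAddCommGroup V] (a1 a2 a3 a4 a5 a6 a7 : V)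
    {b1 b2 b3 b4 b5 b6 b7 : ℝ} (h1 : ‖a1‖ ≤ b1) (h2 : ‖a2‖ ≤ b2) (h3 : ‖a3‖ ≤ b3)
    (h4 : ‖a4‖ ≤ b4) (h5 : ‖a5‖ ≤ b5) (h6 : ‖a6‖ ≤ b6) (h7 : ‖a7‖ ≤ b7) :
    ‖a1 - a2 - a3 + a4 - a5 + a6 - a7‖ ≤ b1 + b2 + b3 + b4 + b5 + b6 + b7 := by
  refine le_trans (norm_sub_le _ _) ?_
  have s1 : ‖a1 - a2 - a3 + a4 - a5 + a6‖ ≤ b1 + b2 + b3 + b4 + b5 + b6 := by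
    refine le_trans (norm_add_le _ _) ?_
    have s2 : ‖a1 - a2 - a3 + a4 - a5‖ ≤ b1 + b2 + b3 + b4 + b5 := by
      refine le_trans (norm_sub_le _ _) ?_
      have s3 : ‖a1 - a2 - a3 + a4‖ ≤ b1 + b2 + b3 + b4 := by
        refine le_trans (norm_add_le _ _) ?_
        have s4 : ‖a1 - a2 - a3‖ ≤ b1 + b2 + b3 := by
          refine le_trans (norm_sub_le _ _) ?_
          have s5 : ‖a1 - a2‖ ≤ b1 + b2 :=
            le_trans (norm_sub_le _ _) (add_le_add h1 h2)
          linarith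
        linarith
      linarith
    linarith
  linarith

lemma norm_chain10 {V : Type*} [SeminormedAddCommGroup V] (a1 a2 a3 a4 a5 a6 a7 a8 a9 a10 : V)
    {b1 b2 b3 b4 b5 b6 b7 b8 b9 b10 : ℝ} (h1 : ‖a1‖ ≤ b1) (h2 : ‖a2‖ ≤ b2) (h3 : ‖a3‖ ≤ b3)
    (h4 : ‖a4‖ ≤ b4) (h5 : ‖a5‖ ≤ b5) (h6 : ‖a6‖ ≤ b6) (h7 : ‖a7‖ ≤ b7) (h8 : ‖a8‖ ≤ b8)
    (h9 : ‖a9‖ ≤ b9) (h10 : ‖a10‖ ≤ b10) :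
    ‖a1 - a2 - a3 + a4 - a5 - a6 + a7 - a8 - a9 + a10‖
      ≤ b1 + b2 + b3 + b4 + b5 + b6 + b7 + b8 + b9 + b10 := by
  have s9 : ‖a1 - a2 - a3 + a4 - a5 - a6 + a7 - a8 - a9‖
      ≤ b1 + b2 + b3 + b4 + b5 + b6 + b7 + b8 + b9 := by
    have s8 : ‖a1 - a2 - a3 + a4 - a5 - a6 + a7 - a8‖
        ≤ b1 + b2 + b3 + b4 + b5 + b6 + b7 + b8 := by
      have s7 : ‖a1 - a2 - a3 + a4 - a5 - a6 + a7‖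
          ≤ b1 + b2 + b3 + b4 + b5 + b6 + b7 := by
        have s6 : ‖a1 - a2 - a3 + a4 - a5 - a6‖ ≤ b1 + b2 + b3 + b4 + b5 + b6 := by
          have s5 : ‖a1 - a2 - a3 + a4 - a5‖ ≤ b1 + b2 + b3 + b4 + b5 := by
            have s4 : ‖a1 - a2 - a3 + a4‖ ≤ b1 + b2 + b3 + b4 := by
              have s3 : ‖a1 - a2 - a3‖ ≤ b1 + b2 + b3 := by
                have s2 : ‖a1 - a2‖ ≤ b1 + b2 :=
                  le_trans (norm_sub_le _ _) (add_le_add h1 h2)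
                exact le_trans (norm_sub_le _ _) (by linarith)
              exact le_trans (norm_add_le _ _) (by linarith)
            exact le_trans (norm_sub_le _ _) (by linarith)
          exact le_trans (norm_sub_le _ _) (by linarith)
        exact le_trans (norm_add_le _ _) (by linarith)
      exact le_trans (norm_sub_le _ _) (by linarith)
    exact le_trans (norm_sub_le _ _) (by linarith)
  exact le_trans (norm_add_le _ _) (by linarith)

lemma norm_chain4 {V : Type*} [SeminormedAddCommGroup V] (a1 a2 a3 a4 : V)
    {b1 b2 b3 b4 : ℝ} (h1 : ‖a1‖ ≤ b1) (h2 : ‖a2‖ ≤ b2) (h3 : ‖a3‖ ≤ b3) (h4 : ‖a4‖ ≤ b4) :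
    ‖a1 - a2 - a3 + a4‖ ≤ b1 + b2 + b3 + b4 := by
  have s3 : ‖a1 - a2 - a3‖ ≤ b1 + b2 + b3 := by
    have s2 : ‖a1 - a2‖ ≤ b1 + b2 := le_trans (norm_sub_le _ _) (add_le_add h1 h2)
    exact le_trans (norm_sub_le _ _) (by linarith)
  exact le_trans (norm_add_le _ _) (by linarith)

end StmtAux

open StmtAux in
lemma keyId (n p : ℕ) (X E : Matrix (Fin n) (Fin p) ℝ) (hX : Xᵀ * X = 1) :
    HL n p X (X + E) -
      ((-2 : ℝ) • (1 : Matrix (Fin p × Fin n) (Fin p × Fin n) ℝ)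
        + (1 / 2 : ℝ) • ((Xᵀ ⊗ₖ X) * commMat n p)
        + (3 / 2 : ℝ) • ((1 : Matrix (Fin p) (Fin p) ℝ) ⊗ₖ (X * Xᵀ)))
    = ((3 / 2 : ℝ) • ((1 : Matrix (Fin p) (Fin p) ℝ) ⊗ₖ (X * Eᵀ))
      - (5 / 4 : ℝ) • ((1 : Matrix (Fin p) (Fin p) ℝ) ⊗ₖ (X * Eᵀ * X * Xᵀ))
      - (1 / 4 : ℝ) • ((Xᵀ ⊗ₖ (X * Eᵀ * X)) * commMat n p)
      + (1 / 2 : ℝ) • ((Eᵀ ⊗ₖ X) * commMat n p)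
      - (1 / 4 : ℝ) • (((Eᵀ * X * Xᵀ) ⊗ₖ X) * commMat n p)
      + (3 / 4 : ℝ) • ((Eᵀ * X) ⊗ₖ (X * Xᵀ))
      - (Eᵀ * X) ⊗ₖ (1 : Matrix (Fin n) (Fin n) ℝ))
    + ((3 / 2 : ℝ) • ((1 : Matrix (Fin p) (Fin p) ℝ) ⊗ₖ (E * Eᵀ))
      - (5 / 4 : ℝ) • ((1 : Matrix (Fin p) (Fin p) ℝ) ⊗ₖ (E * Eᵀ * X * Xᵀ))
      - (1 / 4 : ℝ) • ((Xᵀ ⊗ₖ (E * Eᵀ * X)) * commMat n p)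
      + (3 / 2 : ℝ) • ((Eᵀ ⊗ₖ E) * commMat n p)
      - (5 / 4 : ℝ) • (((Eᵀ * X * Xᵀ) ⊗ₖ E) * commMat n p)
      - (1 / 4 : ℝ) • ((Eᵀ * X) ⊗ₖ (E * Xᵀ))
      + (Eᵀ ⊗ₖ (X * Eᵀ * X)) * commMat n p
      - ((Eᵀ * X * Xᵀ) ⊗ₖ (X * Eᵀ * X)) * commMat n p
      - (Eᵀ * X) ⊗ₖ (X * Eᵀ * X * Xᵀ)
      + (Eᵀ * X) ⊗ₖ (X * Eᵀ))
    + ((Eᵀ ⊗ₖ (E * Eᵀ * X)) * commMat n p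
      - ((Eᵀ * X * Xᵀ) ⊗ₖ (E * Eᵀ * X)) * commMat n p
      - (Eᵀ * X) ⊗ₖ (E * Eᵀ * X * Xᵀ)
      + (Eᵀ * X) ⊗ₖ (E * Eᵀ)) := by
  have hq2 : ∀ M : Matrix (Fin p) (Fin p) ℝ, Xᵀ * (X * M) = M := fun M => by
    rw [← Matrix.mul_assoc, hX, Matrix.one_mul]
  have hq3 : ∀ M : Matrix (Fin p) (Fin n) ℝ, Xᵀ * (X * M) = M := fun M => by
    rw [← Matrix.mul_assoc, hX, Matrix.one_mul]
  simp only [HL, transpose_add, Matrix.add_mul, Matrix.mul_add, Matrix.add_kronecker,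
    Matrix.kronecker_add, Matrix.mul_assoc, hX, hq2, hq3, Matrix.mul_one, Matrix.one_mul,
    Matrix.one_kronecker_one, smul_add]
  module

open StmtAux in
/-- Perturbation bound for the mixed Hessian block `L_ij`:
`‖H_L(X,Y) − (−2I + (1/2)(Xᵀ⊗X)Π + (3/2)(I_p⊗XXᵀ))‖₂
  ≤ (11/2)‖Y−X‖₂ + 10‖Y−X‖₂² + 4‖Y−X‖₂³`. -/
theorem stmt10 (n p : ℕ) (hp : 1 ≤ p) (hnp : p ≤ n)
    (X Y : Matrix (Fin n) (Fin p) ℝ) (hX : Xᵀ * X = 1) (hY : Yᵀ * Y = 1) :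
    specNorm (HL n p X Y -
        ((-2 : ℝ) • (1 : Matrix (Fin p × Fin n) (Fin p × Fin n) ℝ)
          + (1 / 2 : ℝ) • ((Xᵀ ⊗ₖ X) * commMat n p)
          + (3 / 2 : ℝ) • ((1 : Matrix (Fin p) (Fin p) ℝ) ⊗ₖ (X * Xᵀ))))
      ≤ (11 / 2) * specNorm (Y - X) + 10 * specNorm (Y - X) ^ 2
        + 4 * specNorm (Y - X) ^ 3 := by
  set E : Matrix (Fin n) (Fin p) ℝ := Y - X with hE
  have hYXE : Y = X + E := by rw [hE]; abel
  rw [hYXE] at hY ⊢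
  simp only [specNorm_eq_norm]
  rw [keyId n p X E hX]
  set e : ℝ := ‖E‖ with he_def
  have he : 0 ≤ e := norm_nonneg E
  have het : ‖Eᵀ‖ ≤ e := le_of_eq (norm_transpose E)
  have hone : ‖(1 : Matrix (Fin p) (Fin p) ℝ)‖ ≤ 1 := norm_one_le p
  have honen : ‖(1 : Matrix (Fin n) (Fin n) ℝ)‖ ≤ 1 := norm_one_le n
  have hXn : ‖X‖ ≤ 1 := by
    have h := Matrix.l2_opNorm_conjTranspose_mul_self X
    have hct : Xᴴ = Xᵀ := by ext i j; simp [conjTranspose_apply]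
    rw [hct, hX] at h
    nlinarith [norm_nonneg X, hone]
  have hXt : ‖Xᵀ‖ ≤ 1 := le_trans (le_of_eq (norm_transpose X)) hXn
  -- basic products
  have hXXt : ‖X * Xᵀ‖ ≤ 1 := by simpa using mulb X Xᵀ hXn hXt zero_le_one
  have hEX : ‖Eᵀ * X‖ ≤ e := by simpa using mulb Eᵀ X het hXn he
  have hEXXt : ‖Eᵀ * X * Xᵀ‖ ≤ e := by simpa using mulb _ Xᵀ hEX hXt he
  have hXEt : ‖X * Eᵀ‖ ≤ e := by simpa using mulb X Eᵀ hXn het zero_le_one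
  have hXEtX : ‖X * Eᵀ * X‖ ≤ e := by simpa using mulb _ X hXEt hXn he
  have hXEtXXt : ‖X * Eᵀ * X * Xᵀ‖ ≤ e := by simpa using mulb _ Xᵀ hXEtX hXt he
  have hEXt : ‖E * Xᵀ‖ ≤ e := by simpa using mulb E Xᵀ le_rfl hXt he
  have hEEt : ‖E * Eᵀ‖ ≤ e * e := mulb E Eᵀ le_rfl het he
  have hEEtX : ‖E * Eᵀ * X‖ ≤ e * e := by simpa using mulb _ X hEEt hXn (by positivity)
  have hEEtXXt : ‖E * Eᵀ * X * Xᵀ‖ ≤ e * e := by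
    simpa using mulb _ Xᵀ hEEtX hXt (by positivity)
  -- first order monomials
  have m1 : ‖(1 : Matrix (Fin p) (Fin p) ℝ) ⊗ₖ (X * Eᵀ)‖ ≤ e :=
    le_trans (one_kron_le _) hXEt
  have m2 : ‖(1 : Matrix (Fin p) (Fin p) ℝ) ⊗ₖ (X * Eᵀ * X * Xᵀ)‖ ≤ e :=
    le_trans (one_kron_le _) hXEtXXt
  have m3 : ‖(Xᵀ ⊗ₖ (X * Eᵀ * X)) * commMat n p‖ ≤ e := by
    refine le_trans (mul_commMat_le _) ?_
    simpa using kronb Xᵀ _ hXt hXEtX zero_le_one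
  have m4 : ‖(Eᵀ ⊗ₖ X) * commMat n p‖ ≤ e := by
    refine le_trans (mul_commMat_le _) ?_
    simpa using kronb Eᵀ X het hXn he
  have m5 : ‖((Eᵀ * X * Xᵀ) ⊗ₖ X) * commMat n p‖ ≤ e := by
    refine le_trans (mul_commMat_le _) ?_
    simpa using kronb _ X hEXXt hXn he
  have m6 : ‖(Eᵀ * X) ⊗ₖ (X * Xᵀ)‖ ≤ e := by
    simpa using kronb _ _ hEX hXXt he
  have m7 : ‖(Eᵀ * X) ⊗ₖ (1 : Matrix (Fin n) (Fin n) ℝ)‖ ≤ e :=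
    le_trans (kron_one_le _) hEX
  -- second order monomials
  have q1 : ‖(1 : Matrix (Fin p) (Fin p) ℝ) ⊗ₖ (E * Eᵀ)‖ ≤ e * e :=
    le_trans (one_kron_le _) hEEt
  have q2 : ‖(1 : Matrix (Fin p) (Fin p) ℝ) ⊗ₖ (E * Eᵀ * X * Xᵀ)‖ ≤ e * e :=
    le_trans (one_kron_le _) hEEtXXt
  have q3 : ‖(Xᵀ ⊗ₖ (E * Eᵀ * X)) * commMat n p‖ ≤ e * e := by
    refine le_trans (mul_commMat_le _) ?_
    simpa using kronb Xᵀ _ hXt hEEtX zero_le_one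
  have q4 : ‖(Eᵀ ⊗ₖ E) * commMat n p‖ ≤ e * e := by
    refine le_trans (mul_commMat_le _) ?_
    exact kronb Eᵀ E het le_rfl he
  have q5 : ‖((Eᵀ * X * Xᵀ) ⊗ₖ E) * commMat n p‖ ≤ e * e := by
    refine le_trans (mul_commMat_le _) ?_
    exact kronb _ E hEXXt le_rfl he
  have q6 : ‖(Eᵀ * X) ⊗ₖ (E * Xᵀ)‖ ≤ e * e := kronb _ _ hEX hEXt he
  have q7 : ‖(Eᵀ ⊗ₖ (X * Eᵀ * X)) * commMat n p‖ ≤ e * e := by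
    refine le_trans (mul_commMat_le _) ?_
    exact kronb Eᵀ _ het hXEtX he
  have q8 : ‖((Eᵀ * X * Xᵀ) ⊗ₖ (X * Eᵀ * X)) * commMat n p‖ ≤ e * e := by
    refine le_trans (mul_commMat_le _) ?_
    exact kronb _ _ hEXXt hXEtX he
  have q9 : ‖(Eᵀ * X) ⊗ₖ (X * Eᵀ * X * Xᵀ)‖ ≤ e * e := kronb _ _ hEX hXEtXXt he
  have q10 : ‖(Eᵀ * X) ⊗ₖ (X * Eᵀ)‖ ≤ e * e := kronb _ _ hEX hXEt he
  -- third order monomials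
  have r1 : ‖(Eᵀ ⊗ₖ (E * Eᵀ * X)) * commMat n p‖ ≤ e * (e * e) := by
    refine le_trans (mul_commMat_le _) ?_
    exact kronb Eᵀ _ het (by linarith [hEEtX]) he
  have r2 : ‖((Eᵀ * X * Xᵀ) ⊗ₖ (E * Eᵀ * X)) * commMat n p‖ ≤ e * (e * e) := by
    refine le_trans (mul_commMat_le _) ?_
    exact kronb _ _ hEXXt (by linarith [hEEtX]) he
  have r3 : ‖(Eᵀ * X) ⊗ₖ (E * Eᵀ * X * Xᵀ)‖ ≤ e * (e * e) :=
    kronb _ _ hEX (by linarith [hEEtXXt]) he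
  have r4 : ‖(Eᵀ * X) ⊗ₖ (E * Eᵀ)‖ ≤ e * (e * e) := kronb _ _ hEX (by linarith [hEEt]) he
  -- assemble
  have n1 := norm_chain7 _ _ _ _ _ _ _
    (smulb (3/2) _ m1 (by norm_num)) (smulb (5/4) _ m2 (by norm_num))
    (smulb (1/4) _ m3 (by norm_num)) (smulb (1/2) _ m4 (by norm_num))
    (smulb (1/4) _ m5 (by norm_num)) (smulb (3/4) _ m6 (by norm_num)) m7
  have n2 := norm_chain10 _ _ _ _ _ _ _ _ _ _
    (smulb (3/2) _ q1 (by norm_num)) (smulb (5/4) _ q2 (by norm_num))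
    (smulb (1/4) _ q3 (by norm_num)) (smulb (3/2) _ q4 (by norm_num))
    (smulb (5/4) _ q5 (by norm_num)) (smulb (1/4) _ q6 (by norm_num))
    q7 q8 q9 q10
  have n3 := norm_chain4 _ _ _ _ r1 r2 r3 r4
  have he2 : e ^ 2 = e * e := by ring
  have he3 : e ^ 3 = e * (e * e) := by ring
  calc ‖_ + _ + _‖ ≤ _ := norm_add₃_le
    _ ≤ (11/2) * e + 10 * e ^ 2 + 4 * e ^ 3 := by
        rw [he2, he3]; linarith [n1, n2, n3]
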